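/- arXiv:2212.10004 — 8 statements merged into one kernel-verified Lean document; each statement's English description precedes it below -/
import Mathlib

section
/- If G is a finite simple graph with no universal vertex (no vertex adjacent to all other vertices) and minimum degree δ(G) ≥ 1, then C(G) ≥ δ(G) + 2. -/
open Finset

/-- `S` is a dominating set of `G`: every vertex outside `S` has a neighbor in `S`. -/
def Dominates {V : Type*} (G : SimpleGraph V) (S : Finset V) : Prop :=
  ∀ v ∉ S, ∃ u ∈ S, G.Adj u v

/-- Two disjoint non-dominating sets whose union dominates form a coalition. -/
def FormsCoalition {V : Type*} [DecidableEq V] (G : SimpleGraph V) (X Y : Finset V) : Prop :=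
  ¬ Dominates G X ∧ ¬ Dominates G Y ∧ Dominates G (X ∪ Y)

/-- A coalition partition: every class is a singleton dominating set, or is a
non-dominating set forming a coalition with another class. -/
def IsCoalitionPartition {V : Type*} [Fintype V] [DecidableEq V] (G : SimpleGraph V)
    (π : Finpartition (univ : Finset V)) : Prop :=
  ∀ X ∈ π.parts, (X.card = 1 ∧ Dominates G X) ∨
    (¬ Dominates G X ∧ ∃ Y ∈ π.parts, Y ≠ X ∧ ¬ Dominates G Y ∧ Dominates G (X ∪ Y))

/-- The coalition number: the maximum order of a coalition partition. -/
noncomputable def coalitionNumber (V : Type*) [Fintype V] [DecidableEq V]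
    (G : SimpleGraph V) : ℕ :=
  sSup {k | ∃ π : Finpartition (univ : Finset V), IsCoalitionPartition G π ∧ π.parts.card = k}

/-!
Take a vertex `v` of minimum degree `δ` and split `V` into the singletons of the closed
neighbourhood `N[v]` (there are `δ + 1` of them) and the rest `R = V \ N[v]`, which is nonempty
because `v` is not universal. No singleton dominates and `R` misses `v`, so every class is
non-dominating. Each singleton forms a coalition with `R`: `{v} ∪ R` clearly dominates, and for
`u ∈ N(v)` a vertex `w ∈ N(v) \ {u}` with no neighbour in `{u} ∪ R` would have all its
neighbours in `N[v] \ {u, w}`, hence degree at most `δ - 1`.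
-/

namespace SimpleGraph

variable {V : Type*} {G : SimpleGraph V}

lemma not_dominates_singleton {v : V} (h : ∃ u, u ≠ v ∧ ¬G.Adj v u) : ¬Dominates G {v} := by
  obtain ⟨u, huv, hnadj⟩ := h
  intro hdom
  obtain ⟨y, hy, hadj⟩ := hdom u (by simpa using huv)
  rw [mem_singleton] at hy
  exact hnadj (hy ▸ hadj)

variable [DecidableEq V]

def closedNeighborFinset (G : SimpleGraph V) (v : V) [Fintype (G.neighborSet v)] : Finset V :=
  insert v (G.neighborFinset v)

lemma mem_closedNeighborFinset {v w : V} [Fintype (G.neighborSet v)] :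
    w ∈ G.closedNeighborFinset v ↔ w = v ∨ G.Adj v w := by
  rw [closedNeighborFinset, mem_insert, mem_neighborFinset]

lemma card_closedNeighborFinset (v : V) [Fintype (G.neighborSet v)] :
    #(G.closedNeighborFinset v) = G.degree v + 1 :=
  card_insert_of_notMem (notMem_neighborFinset_self G v)

lemma not_dominates_of_disjoint_closedNeighborFinset {v : V} [Fintype (G.neighborSet v)]
    {S : Finset V} (h : Disjoint S (G.closedNeighborFinset v)) : ¬Dominates G S := by
  intro hdom
  obtain ⟨y, hyS, hadj⟩ := hdom v (disjoint_right.1 h (mem_insert_self v _))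
  exact Finset.disjoint_left.1 h hyS (mem_closedNeighborFinset.2 (.inr hadj.symm))

variable [Fintype V] [DecidableRel G.Adj]

lemma compl_closedNeighborFinset_nonempty {v : V} (h : ∃ u, u ≠ v ∧ ¬G.Adj v u) :
    (G.closedNeighborFinset v)ᶜ.Nonempty := by
  obtain ⟨u, huv, hnadj⟩ := h
  exact ⟨u, by simp [mem_closedNeighborFinset, huv, hnadj]⟩

lemma exists_adj_notMem_closedNeighborFinset {v u w : V} (hv : G.degree v = G.minDegree)
    (hu : G.Adj v u) (hw : G.Adj v w) (huw : u ≠ w) (hnadj : ¬G.Adj u w) :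
    ∃ z ∉ G.closedNeighborFinset v, G.Adj z w := by
  by_contra! hout
  have hsub : insert u (insert w (G.neighborFinset w)) ⊆ G.closedNeighborFinset v := by
    intro z hz
    simp only [mem_insert, mem_neighborFinset] at hz
    rcases hz with rfl | rfl | hz
    · exact mem_closedNeighborFinset.2 (.inr hu)
    · exact mem_closedNeighborFinset.2 (.inr hw)
    · by_contra hzv
      exact hout z hzv hz.symm
  have hcard : #(insert u (insert w (G.neighborFinset w))) = G.degree w + 2 := by
    have hu_notMem : u ∉ insert w (G.neighborFinset w) := by
      simpa [huw] using fun h : G.Adj w u => hnadj h.symm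
    rw [card_insert_of_notMem hu_notMem,
      card_insert_of_notMem (notMem_neighborFinset_self G w), card_neighborFinset_eq_degree]
  have hle : G.degree w + 2 ≤ G.minDegree + 1 := by
    rw [← hcard, ← hv, ← card_closedNeighborFinset]
    exact card_le_card hsub
  linarith [G.minDegree_le_degree w]

lemma dominates_singleton_union_compl_closedNeighborFinset {v x : V}
    (hv : G.degree v = G.minDegree) (hx : x ∈ G.closedNeighborFinset v) :
    Dominates G ({x} ∪ (G.closedNeighborFinset v)ᶜ) := by
  intro w hw
  rw [mem_union, not_or, mem_singleton, mem_compl, not_not, mem_closedNeighborFinset] at hw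
  rw [mem_closedNeighborFinset] at hx
  obtain ⟨hwx, hwv | hvw⟩ := hw
  · subst hwv
    rcases hx with rfl | hvx
    · exact absurd rfl hwx
    · exact ⟨x, by simp, hvx.symm⟩
  rcases hx with rfl | hvx
  · exact ⟨x, by simp, hvw⟩
  by_cases hxw : G.Adj x w
  · exact ⟨x, by simp, hxw⟩
  obtain ⟨z, hz, hzw⟩ := exists_adj_notMem_closedNeighborFinset hv hvx hvw (Ne.symm hwx) hxw
  exact ⟨z, mem_union_right _ (mem_compl.2 hz), hzw⟩

def closedNeighborFinsetPartition (v : V) (hne : (G.closedNeighborFinset v)ᶜ.Nonempty) :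
    Finpartition (univ : Finset V) :=
  (⊥ : Finpartition (G.closedNeighborFinset v)).extend hne.ne_empty disjoint_compl_right
    sup_compl_eq_top

lemma card_closedNeighborFinsetPartition (v : V) (hne : (G.closedNeighborFinset v)ᶜ.Nonempty) :
    #(G.closedNeighborFinsetPartition v hne).parts = G.degree v + 2 := by
  rw [closedNeighborFinsetPartition, Finpartition.card_extend, Finpartition.card_bot,
    card_closedNeighborFinset]

lemma mem_closedNeighborFinsetPartition_parts {v : V}
    {hne : (G.closedNeighborFinset v)ᶜ.Nonempty} {X : Finset V} :
    X ∈ (G.closedNeighborFinsetPartition v hne).parts ↔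
      X = (G.closedNeighborFinset v)ᶜ ∨ ∃ x ∈ G.closedNeighborFinset v, {x} = X := by
  rw [closedNeighborFinsetPartition, Finpartition.extend_parts, mem_insert,
    Finpartition.mem_bot_iff]

lemma isCoalitionPartition_closedNeighborFinsetPartition
    (hnofull : ∀ v : V, ∃ u : V, u ≠ v ∧ ¬G.Adj v u) {v : V} (hv : G.degree v = G.minDegree) :
    IsCoalitionPartition G
      (G.closedNeighborFinsetPartition v (compl_closedNeighborFinset_nonempty (hnofull v))) := by
  have hR : ¬Dominates G (G.closedNeighborFinset v)ᶜ :=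
    not_dominates_of_disjoint_closedNeighborFinset disjoint_compl_left
  have hR_ne : ∀ x ∈ G.closedNeighborFinset v, (G.closedNeighborFinset v)ᶜ ≠ {x} :=
    fun x hx hRx => mem_compl.1 (hRx ▸ mem_singleton_self x) hx
  have hvN : v ∈ G.closedNeighborFinset v := mem_insert_self _ _
  intro X hX
  right
  rcases mem_closedNeighborFinsetPartition_parts.1 hX with rfl | ⟨x, hx, rfl⟩
  · refine ⟨hR, {v}, mem_closedNeighborFinsetPartition_parts.2 (.inr ⟨v, hvN, rfl⟩),
      (hR_ne v hvN).symm, not_dominates_singleton (hnofull v), ?_⟩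
    rw [union_comm]
    exact dominates_singleton_union_compl_closedNeighborFinset hv hvN
  · exact ⟨not_dominates_singleton (hnofull x), _,
      mem_closedNeighborFinsetPartition_parts.2 (.inl rfl), hR_ne x hx, hR,
      dominates_singleton_union_compl_closedNeighborFinset hv hx⟩

end SimpleGraph

lemma card_parts_le_coalitionNumber {V : Type*} [Fintype V] [DecidableEq V]
    {G : SimpleGraph V} {π : Finpartition (univ : Finset V)} (hπ : IsCoalitionPartition G π) :
    #π.parts ≤ coalitionNumber V G :=
  le_csSup ⟨#(univ : Finset V), by rintro k ⟨π', -, rfl⟩; exact π'.card_parts_le_card⟩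
    ⟨π, hπ, rfl⟩

theorem stmt1 {V : Type*} [Fintype V] [DecidableEq V] (G : SimpleGraph V) [DecidableRel G.Adj]
    (hnofull : ∀ v : V, ∃ u : V, u ≠ v ∧ ¬ G.Adj v u) (hδ : 1 ≤ G.minDegree) :
    G.minDegree + 2 ≤ coalitionNumber V G := by
  have : Nonempty V := by
    by_contra h
    rw [not_nonempty_iff] at h
    simp [SimpleGraph.minDegree_of_subsingleton] at hδ
  obtain ⟨v, hv⟩ := G.exists_minimal_degree_vertex
  calc G.minDegree + 2
      = #(G.closedNeighborFinsetPartition v _).parts := by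
        rw [G.card_closedNeighborFinsetPartition, hv]
    _ ≤ coalitionNumber V G := card_parts_le_coalitionNumber
        (G.isCoalitionPartition_closedNeighborFinsetPartition hnofull hv.symm)
end

section
/- For any finite simple graph G with maximum degree Δ(G), the coalition number satisfies C(G) ≤ (Δ(G)+3)²/4. -/
open Finset

/-!
If some class dominates, it is a single vertex adjacent to everything, so there are at most
`Δ + 1` classes. Otherwise the relation "`X ∪ Y` dominates" on classes has no isolated class, so
it has a spanning star forest; let `ℓ` be its number of centers. A center `c` is disjoint from the
closed neighbourhood `N[u]` of some vertex `u`, and every class whose union with a class disjoint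
from `N[u]` dominates must meet `N[u]`. So the leaves of `c` meet `N[u]`, and so does every other
center or else one of its leaves. At most `Δ + 1` classes meet `N[u]`, so every center has at most
`Δ + 2 - ℓ` leaves, and the number of classes is at most `ℓ (Δ + 3 - ℓ) ≤ (Δ + 3)² / 4`.
-/

/-- A spanning star forest of `S` for the relation `R`: `p` fixes the centers and sends every
leaf to its center. -/
structure IsStarForest {α : Type*} (R : α → α → Prop) (S : Finset α) (p : α → α) :
    Prop where
  mem : ∀ x ∈ S, p x ∈ S
  idem : ∀ x ∈ S, p (p x) = p x
  rel : ∀ x ∈ S, p x ≠ x → R x (p x)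
  exists_leaf : ∀ x ∈ S, p x = x → ∃ y ∈ S, y ≠ x ∧ p y = x

namespace IsStarForest

variable {α : Type*} {R : α → α → Prop} {S : Finset α} {p : α → α} {x y : α}

lemma empty : IsStarForest R ∅ p := ⟨by simp, by simp, by simp, by simp⟩

variable [DecidableEq α]

lemma insert_new_star (hp : IsStarForest R S p) (hx : x ∉ S) (hy : y ∉ S) (hxy : x ≠ y)
    (hR : R x y) :
    IsStarForest R (insert x (insert y S)) (Function.update (Function.update p x y) y y) := by
  constructor <;> intro z hz <;> simp only [mem_insert] at hz <;>
    simp only [Function.update_apply] at * <;> grind [hp.mem, hp.idem, hp.rel, hp.exists_leaf]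

lemma insert_recenter (hp : IsStarForest R S p) (hx : x ∉ S) (hy : y ∈ S)
    (hw : ∃ w ∈ S, w ≠ y ∧ w ≠ p y ∧ p w = p y) (hR : R x y) :
    IsStarForest R (insert x S) (Function.update (Function.update p x y) y y) := by
  constructor <;> intro z hz <;> simp only [mem_insert] at hz <;>
    simp only [Function.update_apply] at * <;> grind [hp.mem, hp.idem, hp.rel, hp.exists_leaf]

lemma insert_reverse_star (hsymm : ∀ a b, R a b → R b a) (hp : IsStarForest R S p)
    (hx : x ∉ S) (hy : y ∈ S) (hw : ∀ w ∈ S, p w = p y → w = y ∨ w = p y) (hR : R x y) :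
    IsStarForest R (insert x S)
      (Function.update (Function.update (Function.update p x y) y y) (p y) y) := by
  have hpy : p y ≠ y := fun h => by
    obtain ⟨w, hwS, hwy, hpw⟩ := hp.exists_leaf y hy h
    rcases hw w hwS (hpw.trans h.symm) with rfl | rfl <;> simp_all
  have := hsymm _ _ (hp.rel y hy hpy)
  constructor <;> intro z hz <;> simp only [mem_insert] at hz <;>
    simp only [Function.update_apply] at * <;> grind [hp.mem, hp.idem, hp.rel, hp.exists_leaf]

lemma exists_insert (hsymm : ∀ a b, R a b → R b a) (hp : IsStarForest R S p) (hx : x ∉ S)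
    (hxy : x ≠ y) (hR : R x y) : ∃ p', IsStarForest R (insert x (insert y S)) p' := by
  by_cases hy : y ∈ S
  · rw [insert_eq_of_mem hy]
    by_cases hw : ∃ w ∈ S, w ≠ y ∧ w ≠ p y ∧ p w = p y
    · exact ⟨_, hp.insert_recenter hx hy hw hR⟩
    · exact ⟨_, hp.insert_reverse_star hsymm hx hy (fun w hwS h => by grind) hR⟩
  · exact ⟨_, hp.insert_new_star hx hy hxy hR⟩

end IsStarForest

lemma exists_isStarForest {α : Type*} {R : α → α → Prop}
    (hsymm : ∀ a b, R a b → R b a) {P : Finset α}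
    (hP : ∀ x ∈ P, ∃ y ∈ P, y ≠ x ∧ R x y) :
    ∃ p, IsStarForest R P p := by
  classical
  obtain ⟨S, hS, hmax⟩ :=
    exists_max_image (P.powerset.filter fun S => ∃ p, IsStarForest R S p) card
      ⟨∅, by simpa using ⟨id, IsStarForest.empty⟩⟩
  simp only [mem_filter, mem_powerset] at hS hmax
  obtain ⟨hSP, p, hp⟩ := hS
  suffices P ⊆ S from ⟨p, subset_antisymm hSP this ▸ hp⟩
  intro x hxP
  by_contra hxS
  obtain ⟨y, hyP, hyx, hR⟩ := hP x hxP
  have hbig := hmax (insert x (insert y S))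
    ⟨insert_subset hxP (insert_subset hyP hSP), hp.exists_insert hsymm hxS hyx.symm hR⟩
  have := card_le_card (subset_insert y S)
  rw [card_insert_of_notMem (by simpa using ⟨hyx.symm, hxS⟩)] at hbig
  omega

section Counting

variable {α : Type*} [DecidableEq α]

def starCenters (S : Finset α) (p : α → α) : Finset α := S.filter fun x => p x = x

def starLeaves (S : Finset α) (p : α → α) (c : α) : Finset α :=
  S.filter fun x => x ≠ c ∧ p x = c

variable {R : α → α → Prop} {S : Finset α} {p : α → α}

lemma IsStarForest.card_eq_sum_card_starLeaves_add (hp : IsStarForest R S p) :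
    S.card = ∑ c ∈ starCenters S p, (starLeaves S p c).card + (starCenters S p).card := by
  have hfiber : ∀ c ∈ starCenters S p,
      S.filter (fun x => p x = c) = insert c (starLeaves S p c) := by
    intro c hc
    simp only [starCenters, mem_filter] at hc
    ext x
    simp only [starLeaves, mem_filter, mem_insert]
    grind
  rw [card_eq_sum_card_fiberwise (f := p) (t := starCenters S p)
    (fun x hx => by simp [starCenters, hp.mem x hx, hp.idem x hx]), sum_congr rfl
    (fun c hc => by rw [hfiber c hc, card_insert_of_notMem (by simp [starLeaves])]),
    sum_add_distrib, sum_const, smul_eq_mul, mul_one]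

/-- The leaves of `c` and the other centers are sent injectively into `S ∩ T`: a center outside
`T` is replaced by one of its leaves, and `p` recovers it. -/
lemma IsStarForest.card_starLeaves_add_card_starCenters_le (hp : IsStarForest R S p)
    {T : Finset α} (hT : ∀ x ∈ S, ∀ y ∈ S, y ∉ T → R x y → x ∈ T) {c : α}
    (hc : c ∈ starCenters S p) (hcT : c ∉ T) :
    (starLeaves S p c).card + (starCenters S p).card ≤ (S ∩ T).card + 1 := by
  have hleaf : ∀ z, ∃ w, z ∈ S → p z = z → w ∈ S ∧ w ≠ z ∧ p w = z := fun z => by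
    by_cases h : z ∈ S ∧ p z = z
    · obtain ⟨w, hw⟩ := hp.exists_leaf z h.1 h.2
      exact ⟨w, fun _ _ => hw⟩
    · exact ⟨z, fun h1 h2 => absurd ⟨h1, h2⟩ h⟩
  choose leaf hleaf using hleaf
  simp only [starCenters, mem_filter] at hc
  set D := starLeaves S p c ∪ (starCenters S p).erase c
  have hD : D.card + 1 = (starLeaves S p c).card + (starCenters S p).card := by
    rw [card_union_of_disjoint, add_assoc, card_erase_add_one (by simpa [starCenters] using hc)]
    simp only [starLeaves, starCenters]
    grind [disjoint_left]
  have hmaps : Set.MapsTo (fun z => if z ∈ T then z else leaf z) D ↑(S ∩ T) := by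
    intro z hz
    simp only [D, coe_union, Set.mem_union, mem_coe, starLeaves, starCenters, mem_erase,
      mem_filter] at hz
    simp only [coe_inter, Set.mem_inter_iff, mem_coe]
    grind [hp.rel]
  have hinv : Set.LeftInvOn (fun w => if p w = c then w else p w)
      (fun z => if z ∈ T then z else leaf z) D := by
    intro z hz
    simp only [D, coe_union, Set.mem_union, mem_coe, starLeaves, starCenters, mem_erase,
      mem_filter] at hz
    grind [hp.rel]
  have := card_le_card_of_injOn _ hmaps hinv.injOn
  omega

lemma IsStarForest.four_mul_card_le (hp : IsStarForest R S p) {m : ℕ}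
    (h : ∀ c ∈ starCenters S p, (starLeaves S p c).card + (starCenters S p).card ≤ m) :
    4 * S.card ≤ (m + 1) ^ 2 := by
  have hsum := sum_le_sum h
  rw [sum_add_distrib, sum_const, sum_const, smul_eq_mul, smul_eq_mul] at hsum
  have hcard := hp.card_eq_sum_card_starLeaves_add
  have key : (S.card : ℤ) + (starCenters S p).card ^ 2 ≤ (starCenters S p).card * (m + 1) := by
    norm_cast; nlinarith
  have : (4 * S.card : ℤ) ≤ (m + 1) ^ 2 := by
    nlinarith [sq_nonneg ((m : ℤ) + 1 - 2 * (starCenters S p).card)]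
  exact_mod_cast this

end Counting

section Domination

variable {V : Type*} [Fintype V] [DecidableEq V] {G : SimpleGraph V} [DecidableRel G.Adj]

lemma card_insert_neighborFinset_le (u : V) :
    (insert u (G.neighborFinset u)).card ≤ G.maxDegree + 1 := by
  grw [card_insert_le, G.card_neighborFinset_eq_degree, G.degree_le_maxDegree u]

lemma dominates_iff_forall_not_disjoint {S : Finset V} :
    Dominates G S ↔ ∀ u, ¬ Disjoint S (insert u (G.neighborFinset u)) := by
  constructor
  · intro h u hdisj
    by_cases hu : u ∈ S
    · exact disjoint_left.mp hdisj hu (mem_insert_self u _)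
    · obtain ⟨w, hw, hwu⟩ := h u hu
      exact disjoint_left.mp hdisj hw
        (mem_insert_of_mem ((G.mem_neighborFinset u w).mpr hwu.symm))
  · intro h v hv
    obtain ⟨w, hwS, hw⟩ := not_disjoint_iff.mp (h v)
    rcases mem_insert.mp hw with rfl | hw
    · exact absurd hwS hv
    · exact ⟨w, hwS, ((G.mem_neighborFinset v w).mp hw).symm⟩

lemma card_le_maxDegree_add_one_of_dominates_singleton {x : V} (h : Dominates G {x}) :
    Fintype.card V ≤ G.maxDegree + 1 := by
  have hsub : univ ⊆ insert x (G.neighborFinset x) := fun v _ => by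
    obtain rfl | hv := eq_or_ne v x
    · exact mem_insert_self v _
    · obtain ⟨w, hw, hwv⟩ := h v (by simpa using hv)
      rw [mem_singleton.mp hw] at hwv
      simp [hwv]
  exact (card_le_card hsub).trans (card_insert_neighborFinset_le x)

end Domination

lemma Finpartition.card_filter_not_disjoint_le {α : Type*} [DecidableEq α] {s : Finset α}
    (P : Finpartition s) (T : Finset α) :
    (P.parts.filter fun X => ¬ Disjoint X T).card ≤ T.card := by
  refine (card_le_card (t := T.image P.part) fun X hX => ?_).trans card_image_le
  obtain ⟨hX, hXT⟩ := mem_filter.mp hX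
  obtain ⟨v, hvX, hvT⟩ := not_disjoint_iff.mp hXT
  exact mem_image.mpr ⟨v, hvT, P.part_eq_of_mem hX hvX⟩

namespace IsCoalitionPartition

variable {V : Type*} [Fintype V] [DecidableEq V] {G : SimpleGraph V} [DecidableRel G.Adj]
  {π : Finpartition (univ : Finset V)}

lemma card_parts_le_of_dominates (hπ : IsCoalitionPartition G π) {X : Finset V}
    (hX : X ∈ π.parts) (hdom : Dominates G X) : π.parts.card ≤ G.maxDegree + 1 := by
  obtain ⟨hcard, -⟩ := (hπ X hX).resolve_right fun h => h.1 hdom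
  obtain ⟨x, rfl⟩ := card_eq_one.mp hcard
  simpa using
    π.card_parts_le_card.trans (card_le_maxDegree_add_one_of_dominates_singleton hdom)

lemma four_mul_card_parts_le (hπ : IsCoalitionPartition G π) :
    4 * π.parts.card ≤ (G.maxDegree + 3) ^ 2 := by
  by_cases hdom : ∃ X ∈ π.parts, Dominates G X
  · obtain ⟨X, hX, hdom⟩ := hdom
    have := hπ.card_parts_le_of_dominates hX hdom
    nlinarith
  push Not at hdom
  have hpartner : ∀ X ∈ π.parts, ∃ Y ∈ π.parts, Y ≠ X ∧ Dominates G (X ∪ Y) :=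
    fun X hX =>
    match hπ X hX with
    | .inl h => absurd h.2 (hdom X hX)
    | .inr ⟨_, Y, hY, hYX, _, hXY⟩ => ⟨Y, hY, hYX, hXY⟩
  obtain ⟨p, hp⟩ := exists_isStarForest (fun X Y h => union_comm X Y ▸ h) hpartner
  refine hp.four_mul_card_le fun c hc => ?_
  obtain ⟨u, hu⟩ : ∃ u, Disjoint c (insert u (G.neighborFinset u)) := by
    simpa [dominates_iff_forall_not_disjoint] using hdom c (mem_filter.mp hc).1
  set T := π.parts.filter fun X => ¬ Disjoint X (insert u (G.neighborFinset u))
  have hT :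
      ∀ X ∈ π.parts, ∀ Y ∈ π.parts, Y ∉ T → Dominates G (X ∪ Y) → X ∈ T := by
    intro X hX Y hY hYT hXY
    have := dominates_iff_forall_not_disjoint.mp hXY u
    simp_all [T, disjoint_union_left]
  have hbound :=
    hp.card_starLeaves_add_card_starCenters_le hT hc fun h => (mem_filter.mp h).2 hu
  have hTcard : (π.parts ∩ T).card ≤ G.maxDegree + 1 :=
    (card_le_card inter_subset_right).trans
      ((π.card_filter_not_disjoint_le _).trans (card_insert_neighborFinset_le u))
  omega

end IsCoalitionPartition

theorem stmt2 {V : Type*} [Fintype V] [DecidableEq V] (G : SimpleGraph V) [DecidableRel G.Adj] :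
    (coalitionNumber V G : ℝ) ≤ ((G.maxDegree : ℝ) + 3) ^ 2 / 4 := by
  have hle : coalitionNumber V G ≤ (G.maxDegree + 3) ^ 2 / 4 := by
    refine csSup_le' ?_
    rintro k ⟨π, hπ, rfl⟩
    exact (Nat.le_div_iff_mul_le (by norm_num)).mpr (by linarith [hπ.four_mul_card_parts_le])
  calc (coalitionNumber V G : ℝ)
      ≤ (((G.maxDegree + 3) ^ 2 / 4 : ℕ) : ℝ) := by exact_mod_cast hle
    _ ≤ (((G.maxDegree + 3) ^ 2 : ℕ) : ℝ) / 4 := Nat.cast_div_le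
    _ = ((G.maxDegree : ℝ) + 3) ^ 2 / 4 := by push_cast; ring
end

section
/- Let G be a graph with maximum degree Δ(G), let π be a coalition partition of G of maximum order, and let X ∈ π. Then X forms a coalition with at most Δ(G)+1 other sets of π; that is, there are at most Δ(G)+1 sets Y ∈ π with Y ≠ X such that neither X nor Y is a dominating set but X ∪ Y is a dominating set. -/
open Finset

/-! Proof idea: if `X` dominates, it forms no coalition at all. Otherwise some vertex `v` is
neither in `X` nor adjacent to `X`, so every partner `Y` of `X` must meet the closed
neighbourhood `N[v]` in order for `X ∪ Y` to dominate `v`. The classes of `π` are disjoint,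
so at most `|N[v]| ≤ Δ(G) + 1` of them meet `N[v]`. -/

section

variable {V : Type*} [DecidableEq V]

lemma Finpartition.card_filter_inter_nonempty_le {s : Finset V} (P : Finpartition s)
    (N : Finset V) : #{Y ∈ P.parts | (Y ∩ N).Nonempty} ≤ #N := by
  set F := P.parts.filter fun Y => (Y ∩ N).Nonempty
  have hdisj : (F : Set (Finset V)).PairwiseDisjoint (· ∩ N) := fun Y hY Z hZ hYZ =>
    (P.disjoint (filter_subset _ _ hY) (filter_subset _ _ hZ) hYZ).mono
      inter_subset_left inter_subset_left
  calc #F ≤ #(F.biUnion (· ∩ N)) := card_le_card_biUnion hdisj fun Y hY => (mem_filter.1 hY).2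
    _ ≤ #N := card_le_card (biUnion_subset.2 fun _ _ => inter_subset_right)

namespace SimpleGraph

variable {G : SimpleGraph V}

lemma card_insert_neighborFinset_le_maxDegree_add_one [Fintype V] [DecidableRel G.Adj]
    (v : V) : #(insert v (G.neighborFinset v)) ≤ G.maxDegree + 1 :=
  (card_insert_le _ _).trans <| by
    rw [card_neighborFinset_eq_degree]
    exact Nat.succ_le_succ (G.degree_le_maxDegree v)

lemma inter_insert_neighborFinset_nonempty_of_dominates_union {X Y : Finset V} {v : V}
    [Fintype (G.neighborSet v)] (hvX : v ∉ X) (hv : ∀ u ∈ X, ¬ G.Adj u v)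
    (hXY : Dominates G (X ∪ Y)) : (Y ∩ insert v (G.neighborFinset v)).Nonempty := by
  by_cases hvY : v ∈ Y
  · exact ⟨v, mem_inter.2 ⟨hvY, mem_insert_self _ _⟩⟩
  obtain ⟨u, hu, huv⟩ := hXY v (by simp [hvX, hvY])
  have huY : u ∈ Y := (mem_union.1 hu).resolve_left fun huX => hv u huX huv
  exact ⟨u, mem_inter.2 ⟨huY, mem_insert_of_mem ((mem_neighborFinset _ _ _).2 huv.symm)⟩⟩

end SimpleGraph

end

theorem stmt3_general {V : Type*} [Fintype V] [DecidableEq V] (G : SimpleGraph V) [DecidableRel G.Adj]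
    (π : Finpartition (univ : Finset V)) (X : Finset V) :
    {Y | Y ∈ π.parts ∧ Y ≠ X ∧ FormsCoalition G X Y}.ncard ≤ G.maxDegree + 1 := by
  by_cases hXdom : Dominates G X
  · simp [FormsCoalition, hXdom]
  obtain ⟨v, hvX, hv⟩ : ∃ v ∉ X, ∀ u ∈ X, ¬ G.Adj u v := by
    simpa [Dominates] using hXdom
  set N := insert v (G.neighborFinset v)
  calc _ ≤ (↑{Y ∈ π.parts | (Y ∩ N).Nonempty} : Set (Finset V)).ncard :=
        Set.ncard_le_ncard fun Y (hY' : Y ∈ π.parts ∧ Y ≠ X ∧ FormsCoalition G X Y) => by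
          obtain ⟨hY, -, -, -, hXY⟩ := hY'
          simpa [hY] using G.inter_insert_neighborFinset_nonempty_of_dominates_union hvX hv hXY
    _ = #{Y ∈ π.parts | (Y ∩ N).Nonempty} := Set.ncard_coe_finset _
    _ ≤ #N := π.card_filter_inter_nonempty_le N
    _ ≤ G.maxDegree + 1 := G.card_insert_neighborFinset_le_maxDegree_add_one v

theorem stmt3 {V : Type*} [Fintype V] [DecidableEq V] (G : SimpleGraph V) [DecidableRel G.Adj]
    (π : Finpartition (univ : Finset V)) (hπ : IsCoalitionPartition G π)
    (hmax : π.parts.card = coalitionNumber V G) (X : Finset V) (hX : X ∈ π.parts) :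
    {Y | Y ∈ π.parts ∧ Y ≠ X ∧ FormsCoalition G X Y}.ncard ≤ G.maxDegree + 1 :=
  stmt3_general G π X
end

section
/- The coalition number of the complete bipartite graph K_{3,3} equals 6. -/
open Finset

/- In `K_{m,n}` with `m, n ≥ 2` no single vertex dominates (it misses the other vertices of its
own side), while a vertex together with any vertex of the other side dominates. Hence the
partition into singletons is a coalition partition, and no partition has more classes. -/

section CoalitionNumber

variable {V : Type*} [Fintype V] [DecidableEq V] {G : SimpleGraph V}

theorem coalitionNumber_eq_card (h : IsCoalitionPartition G ⊥) :
    coalitionNumber V G = Fintype.card V := by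
  set orders :=
    {k | ∃ π : Finpartition (univ : Finset V), IsCoalitionPartition G π ∧ π.parts.card = k}
  have hbot : Fintype.card V ∈ orders := ⟨⊥, h, by rw [Finpartition.card_bot, card_univ]⟩
  have hbdd : ∀ k ∈ orders, k ≤ Fintype.card V := by
    rintro k ⟨π, -, rfl⟩
    simpa using π.card_parts_le_card
  exact le_antisymm (csSup_le ⟨_, hbot⟩ hbdd) (le_csSup ⟨_, hbdd⟩ hbot)

theorem isCoalitionPartition_bot_of_forall (hsingle : ∀ a, ¬ Dominates G {a})
    (hpair : ∀ a, ∃ b ≠ a, Dominates G {a, b}) : IsCoalitionPartition G ⊥ := by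
  intro X hX
  obtain ⟨a, -, rfl⟩ := Finpartition.mem_bot_iff.mp hX
  obtain ⟨b, hba, hdom⟩ := hpair a
  refine .inr ⟨hsingle a, {b}, Finpartition.mem_bot_iff.mpr ⟨b, mem_univ b, rfl⟩,
    singleton_inj.not.mpr hba, hsingle b, ?_⟩
  rwa [← insert_eq]

end CoalitionNumber

namespace completeBipartiteGraph

variable {V W : Type*}

theorem not_dominates_singleton [Nontrivial V] [Nontrivial W] (a : V ⊕ W) :
    ¬ Dominates (completeBipartiteGraph V W) {a} := by
  intro h
  cases a with
  | inl v =>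
    obtain ⟨v', hv'⟩ := exists_ne v
    simpa using h (.inl v') (by simpa using hv')
  | inr w =>
    obtain ⟨w', hw'⟩ := exists_ne w
    simpa using h (.inr w') (by simpa using hw')

theorem dominates_pair [DecidableEq V] [DecidableEq W] (v : V) (w : W) :
    Dominates (completeBipartiteGraph V W) {.inl v, .inr w} := by
  rintro (v' | w') -
  · exact ⟨.inr w, by simp, by simp⟩
  · exact ⟨.inl v, by simp, by simp⟩

theorem isCoalitionPartition_bot [Fintype V] [DecidableEq V] [Fintype W] [DecidableEq W]
    [Nontrivial V] [Nontrivial W] :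
    IsCoalitionPartition (completeBipartiteGraph V W) ⊥ := by
  refine isCoalitionPartition_bot_of_forall not_dominates_singleton ?_
  rintro (v | w)
  · obtain ⟨w⟩ := ‹Nontrivial W›.to_nonempty
    exact ⟨.inr w, Sum.inr_ne_inl, dominates_pair v w⟩
  · obtain ⟨v⟩ := ‹Nontrivial V›.to_nonempty
    exact ⟨.inl v, Sum.inl_ne_inr, pair_comm (Sum.inl v) (Sum.inr w) ▸ dominates_pair v w⟩

end completeBipartiteGraph

theorem stmt5 : coalitionNumber (Fin 3 ⊕ Fin 3) (completeBipartiteGraph (Fin 3) (Fin 3)) = 6 := by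
  rw [coalitionNumber_eq_card completeBipartiteGraph.isCoalitionPartition_bot]
  rfl
end

section
/- The coalition number of the 3-dimensional hypercube graph Q_3 equals 8; in particular, the partition of V(Q_3) into eight singletons is a coalition partition. -/
open Finset

def cubeQ3 : SimpleGraph (Fin 3 → Bool) :=
  SimpleGraph.fromRel (fun a b => (univ.filter (fun i => a i ≠ b i)).card = 1)

/-! A vertex of `Q₃` has only three neighbours, so no singleton dominates the eight vertices;
but every vertex other than `v` and its antipode differs from one of them in exactly one
coordinate, so each antipodal pair dominates. Hence the partition into singletons is a
coalition partition, and no partition has more than eight classes. -/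

section Coalition

variable {V : Type*} [Fintype V] [DecidableEq V] (G : SimpleGraph V)

theorem isCoalitionPartition_bot_of_forall_dominates_pair
    (h_single : ∀ v, ¬ Dominates G {v})
    (h_pair : ∀ v, ∃ w, w ≠ v ∧ Dominates G ({v} ∪ {w})) :
    IsCoalitionPartition G (⊥ : Finpartition (univ : Finset V)) := by
  intro X hX
  obtain ⟨v, -, rfl⟩ := Finpartition.mem_bot_iff.mp hX
  obtain ⟨w, hwv, hdom⟩ := h_pair v
  exact .inr ⟨h_single v, {w}, Finpartition.mem_bot_iff.mpr ⟨w, mem_univ w, rfl⟩,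
    singleton_inj.not.mpr hwv, h_single w, hdom⟩

theorem coalitionNumber_eq_card_of_isCoalitionPartition_bot
    (h : IsCoalitionPartition G (⊥ : Finpartition (univ : Finset V))) :
    coalitionNumber V G = Fintype.card V := by
  have h_bot : Fintype.card V ∈
      {k | ∃ π : Finpartition (univ : Finset V), IsCoalitionPartition G π ∧ π.parts.card = k} :=
    ⟨⊥, h, Finpartition.card_bot _⟩
  refine le_antisymm (csSup_le ⟨_, h_bot⟩ ?_) (le_csSup ⟨Fintype.card V, ?_⟩ h_bot) <;>
    rintro k ⟨π, -, rfl⟩ <;> exact π.card_parts_le_card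

end Coalition

instance : DecidableRel cubeQ3.Adj := fun a b => by
  unfold cubeQ3 SimpleGraph.fromRel
  infer_instance

instance (S : Finset (Fin 3 → Bool)) : Decidable (Dominates cubeQ3 S) := by
  unfold Dominates
  infer_instance

theorem cubeQ3_not_dominates_singleton : ∀ v, ¬ Dominates cubeQ3 {v} := by
  decide

theorem cubeQ3_dominates_antipodal_pair : ∀ v, Dominates cubeQ3 ({v} ∪ {fun i => !v i}) := by
  decide

theorem stmt7 : coalitionNumber (Fin 3 → Bool) cubeQ3 = 8 ∧
    IsCoalitionPartition cubeQ3 ((⊥ : Finpartition (univ : Finset (Fin 3 → Bool)))) := by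
  have h_bot : IsCoalitionPartition cubeQ3 (⊥ : Finpartition (univ : Finset (Fin 3 → Bool))) :=
    isCoalitionPartition_bot_of_forall_dominates_pair cubeQ3 cubeQ3_not_dominates_singleton fun v =>
      ⟨fun i => !v i, fun h => by simpa using congrFun h 0, cubeQ3_dominates_antipodal_pair v⟩
  exact ⟨(coalitionNumber_eq_card_of_isCoalitionPartition_bot cubeQ3 h_bot).trans (by simp), h_bot⟩
end

section
/- If G is a cubic graph (3-regular) of order n ≥ 6 with domination number at least 3 and a coalition partition π of G consists of one class of size 2 and n−2 singleton classes, then n−2 ≤ 4; in particular no cubic graph of order 10 with domination number at least 3 admits a coalition partition into one doubleton and eight singletons. -/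
open Finset

/-!
Since `X` has fewer than `γ(G)` vertices, some vertex `w` is not dominated by `X`. A singleton
class `{a}` is not dominating, and its coalition partner cannot be another singleton, so it is
`X`; as `{a} ∪ X` dominates `w`, the vertex `a` lies in the closed neighbourhood `N[w]`, which has
four vertices. Hence there are at most four singleton classes.
-/

section

variable {V : Type*} {G : SimpleGraph V}

lemma Dominates.exists_eq_or_adj_of_union [DecidableEq V] {X Y : Finset V} {w : V}
    (h : Dominates G (Y ∪ X)) (hwX : w ∉ X) (hw : ∀ u ∈ X, ¬ G.Adj u w) :
    ∃ a ∈ Y, a = w ∨ G.Adj a w := by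
  by_cases hwY : w ∈ Y
  · exact ⟨w, hwY, Or.inl rfl⟩
  obtain ⟨u, hu, hadj⟩ := h w (by simp [hwY, hwX])
  rcases mem_union.1 hu with hu | hu
  · exact ⟨u, hu, Or.inr hadj⟩
  · exact absurd hadj (hw u hu)

lemma IsCoalitionPartition.dominates_union_of_forall_card_eq_one [Fintype V] [DecidableEq V]
    {π : Finpartition (univ : Finset V)} (hπ : IsCoalitionPartition G π)
    (hγ : ∀ S : Finset V, Dominates G S → 3 ≤ S.card) {X Y : Finset V}
    (hsing : ∀ Z ∈ π.parts, Z ≠ X → Z.card = 1) (hY : Y ∈ π.parts) (hYX : Y ≠ X) :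
    Dominates G (Y ∪ X) := by
  have hY1 := hsing Y hY hYX
  rcases hπ Y hY with ⟨-, hdom⟩ | ⟨-, Z, hZ, -, -, hdom⟩
  · have := hγ Y hdom
    omega
  by_cases hZX : Z = X
  · rwa [hZX] at hdom
  have := (hγ _ hdom).trans (card_union_le Y Z)
  have := hsing Z hZ hZX
  omega

end

theorem stmt12_general {V : Type*} [Fintype V] [DecidableEq V] (G : SimpleGraph V)
    [DecidableRel G.Adj] (hreg : G.IsRegularOfDegree 3) (n : ℕ)
    (hγ : ∀ S : Finset V, Dominates G S → 3 ≤ S.card)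
    (π : Finpartition (univ : Finset V)) (hπ : IsCoalitionPartition G π)
    (X : Finset V) (hX : X ∈ π.parts) (hX2 : X.card = 2)
    (hsing : ∀ Y ∈ π.parts, Y ≠ X → Y.card = 1) (hcount : π.parts.card = n - 1) :
    n - 2 ≤ 4 := by
  obtain ⟨w, hwX, hw⟩ : ∃ w ∉ X, ∀ u ∈ X, ¬ G.Adj u w := by
    have hXnd : ¬ Dominates G X := fun h => by have := hγ X h; omega
    simpa [Dominates] using hXnd
  set N := insert w (G.neighborFinset w)
  have hN : N.card ≤ 4 :=
    (card_insert_le _ _).trans (by rw [G.card_neighborFinset_eq_degree, hreg w])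
  have hsub : π.parts.erase X ⊆ N.image ({·}) := by
    intro Y hY
    obtain ⟨hYX, hY⟩ := mem_erase.1 hY
    obtain ⟨a, rfl⟩ := card_eq_one.1 (hsing Y hY hYX)
    obtain ⟨b, hb, hbw⟩ :=
      (hπ.dominates_union_of_forall_card_eq_one hγ hsing hY hYX).exists_eq_or_adj_of_union hwX hw
    rw [mem_singleton.1 hb] at hbw
    refine mem_image_of_mem _ ?_
    rcases hbw with rfl | hadj
    · exact mem_insert_self _ _
    · exact mem_insert_of_mem ((G.mem_neighborFinset w a).2 hadj.symm)
  have hcard := (card_le_card hsub).trans card_image_le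
  rw [card_erase_of_mem hX] at hcard
  omega

theorem stmt12 {V : Type*} [Fintype V] [DecidableEq V] (G : SimpleGraph V) [DecidableRel G.Adj]
    [DecidableRel G.Adj] (hreg : G.IsRegularOfDegree 3) (n : ℕ) (hn : Fintype.card V = n) (h6 : 6 ≤ n)
    (hγ : ∀ S : Finset V, Dominates G S → 3 ≤ S.card)
    (π : Finpartition (univ : Finset V)) (hπ : IsCoalitionPartition G π)
    (X : Finset V) (hX : X ∈ π.parts) (hX2 : X.card = 2)
    (hsing : ∀ Y ∈ π.parts, Y ≠ X → Y.card = 1) (hcount : π.parts.card = n - 1) :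
    n - 2 ≤ 4 :=
  stmt12_general G hreg n hγ π hπ X hX hX2 hsing hcount
end

section
/- For every cubic graph G, 5 ≤ C(G) ≤ 9. -/
open Finset

/-!
Upper bound: every part of a coalition partition is non-dominating, so it misses some closed
neighbourhood `N[x]`, and its partner must then meet `N[x]`. Counting the parts that meet two
well-chosen closed neighbourhoods gives `C(G) ≤ (Δ + 3)² / 4`, which is `9` for `Δ = 3`.

Lower bound: for a vertex `v` of minimum degree, the singletons of `N[v]` together with the
complement of `N[v]` form a coalition partition with `δ + 2 = 5` parts.
-/

namespace SimpleGraph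

variable {V : Type*} [Fintype V] [DecidableEq V] (G : SimpleGraph V) [DecidableRel G.Adj]

def closedNbhd (x : V) : Finset V := insert x (G.neighborFinset x)

variable {G}

lemma mem_closedNbhd {x y : V} : y ∈ G.closedNbhd x ↔ y = x ∨ G.Adj x y := by
  rw [closedNbhd, mem_insert, mem_neighborFinset]

lemma mem_closedNbhd_comm {x y : V} : y ∈ G.closedNbhd x ↔ x ∈ G.closedNbhd y := by
  simp only [mem_closedNbhd, adj_comm, eq_comm]

variable (G) in
lemma card_closedNbhd (x : V) : #(G.closedNbhd x) = G.degree x + 1 :=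
  card_insert_of_notMem (G.notMem_neighborFinset_self x)

end SimpleGraph

open SimpleGraph

section Domination

variable {V : Type*} [Fintype V] [DecidableEq V] {G : SimpleGraph V} [DecidableRel G.Adj]

lemma dominates_iff_forall_not_disjoint_closedNbhd {S : Finset V} :
    Dominates G S ↔ ∀ x, ¬ Disjoint S (G.closedNbhd x) := by
  simp only [Dominates, not_disjoint_iff, mem_closedNbhd]
  refine forall_congr' fun x => ⟨fun h => ?_, fun h hx => ?_⟩
  · by_cases hx : x ∈ S
    · exact ⟨x, hx, .inl rfl⟩
    · obtain ⟨u, hu, hux⟩ := h hx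
      exact ⟨u, hu, .inr hux.symm⟩
  · obtain ⟨u, hu, rfl | hxu⟩ := h
    · exact absurd hu hx
    · exact ⟨u, hu, hxu.symm⟩

lemma Dominates.card_le_degree_add_one {v : V} (h : Dominates G {v}) :
    Fintype.card V ≤ G.degree v + 1 := by
  rw [← card_closedNbhd, ← card_univ]
  refine card_le_card fun x _ => mem_closedNbhd_comm.1 ?_
  simpa using dominates_iff_forall_not_disjoint_closedNbhd.1 h x

end Domination

lemma Finset.card_sdiff_union_add_card_inter_lt {α : Type*} [DecidableEq α]
    {A B C : Finset α} (hA : #(A ∩ B) ≤ #(C ∩ A)) (hB : #(A ∩ B) ≤ #(C ∩ B)) {t : α}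
    (htA : t ∈ A) (htB : t ∈ B) (htC : t ∉ C) : #(C \ (A ∪ B)) + #(A ∩ B) < #C := by
  have hsplit := card_sdiff_add_card_inter C (A ∪ B)
  have hunion := card_union_add_card_inter (C ∩ A) (C ∩ B)
  have hinter : #(C ∩ A ∩ (C ∩ B)) < #(A ∩ B) := by
    refine card_lt_card ⟨fun y hy => ?_, fun h => htC ?_⟩
    · simp only [mem_inter] at hy ⊢
      exact ⟨hy.1.2, hy.2.2⟩
    · exact (mem_inter.1 (mem_inter.1 (h (mem_inter.2 ⟨htA, htB⟩))).1).1
  rw [← inter_union_distrib_left] at hunion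
  omega

lemma Nat.four_mul_le_sq_of_add_le {n m d : ℕ} (h : n + m ≤ 2 * d + m * (d - (m + 1))) :
    4 * n ≤ (d + 2) ^ 2 := by
  rcases le_or_gt (m + 1) d with hmd | hmd
  · obtain ⟨k, rfl⟩ := Nat.exists_eq_add_of_le hmd
    rw [Nat.add_sub_cancel_left] at h
    nlinarith [sq_nonneg ((m : ℤ) - k + 1)]
  · rw [Nat.sub_eq_zero_of_le hmd.le, mul_zero] at h
    nlinarith

section UpperBound

variable {V : Type*} [Fintype V] [DecidableEq V] {G : SimpleGraph V} [DecidableRel G.Adj]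
  {π : Finpartition (univ : Finset V)}

variable (G π) in
def partsMeeting (x : V) : Finset (Finset V) :=
  {P ∈ π.parts | ¬ Disjoint P (G.closedNbhd x)}

lemma card_partsMeeting_le (x : V) : #(partsMeeting G π x) ≤ G.maxDegree + 1 := by
  have hsub : partsMeeting G π x ⊆ (G.closedNbhd x).image π.part := by
    intro P hP
    obtain ⟨hP, hmeet⟩ := mem_filter.1 hP
    obtain ⟨a, haP, hax⟩ := not_disjoint_iff.1 hmeet
    exact mem_image.2 ⟨a, hax, π.part_eq_of_mem hP haP⟩
  calc #(partsMeeting G π x) ≤ #(G.closedNbhd x) := (card_le_card hsub).trans card_image_le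
    _ ≤ G.maxDegree + 1 := by
      rw [card_closedNbhd]
      exact Nat.succ_le_succ (G.degree_le_maxDegree x)

lemma mem_partsMeeting_of_dominates_union {P Q : Finset V} {x : V} (hQ : Q ∈ π.parts)
    (hP : Disjoint P (G.closedNbhd x)) (h : Dominates G (P ∪ Q)) : Q ∈ partsMeeting G π x := by
  refine mem_filter.2 ⟨hQ, fun hQx => ?_⟩
  exact dominates_iff_forall_not_disjoint_closedNbhd.1 h x (disjoint_union_left.2 ⟨hP, hQx⟩)

/-- A part missing both `N[z]` and `N[z']` has its partner among the parts meeting both, and it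
meets the closed neighbourhood of any vertex that this partner misses. -/
lemma parts_subset_partsMeeting_union
    (hpartner : ∀ P ∈ π.parts, ∃ Q ∈ π.parts, Dominates G (P ∪ Q))
    {w : Finset V → V} (hw : ∀ T ∈ π.parts, Disjoint T (G.closedNbhd (w T))) (z z' : V) :
    π.parts ⊆ (partsMeeting G π z ∪ partsMeeting G π z') ∪
      (partsMeeting G π z ∩ partsMeeting G π z').biUnion
        fun T => partsMeeting G π (w T) \ (partsMeeting G π z ∪ partsMeeting G π z') := by
  intro P hP
  by_cases hPU : P ∈ partsMeeting G π z ∪ partsMeeting G π z'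
  · exact mem_union_left _ hPU
  simp only [partsMeeting, mem_union, mem_filter, hP, true_and, not_or, not_not] at hPU
  obtain ⟨Q, hQ, hPQ⟩ := hpartner P hP
  refine mem_union_right _ (mem_biUnion.2 ⟨Q, ?_, mem_sdiff.2 ⟨?_, ?_⟩⟩)
  · exact mem_inter.2 ⟨mem_partsMeeting_of_dominates_union hQ hPU.1 hPQ,
      mem_partsMeeting_of_dominates_union hQ hPU.2 hPQ⟩
  · exact mem_partsMeeting_of_dominates_union hP (hw Q hQ) (union_comm P Q ▸ hPQ)
  · simpa [partsMeeting, hP] using hPU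

/-- Take `z, z'` minimising the number `m` of parts meeting both `N[z]` and `N[z']`. Every part
lies in one of these two families (at most `2(Δ + 1) - m` parts) or meets `N[w T]` for a part `T`
in their intersection, where `T` misses `N[w T]`; minimality of `m` leaves at most `Δ - m` such
new parts per `T`. Optimising `2(Δ + 1) + m(Δ - 1 - m)` over `m` gives `(Δ + 3)² / 4`. -/
theorem IsCoalitionPartition.four_mul_card_parts_le_s13 (hπ : IsCoalitionPartition G π)
    (hG : ∀ v, ¬ Dominates G {v}) : 4 * #π.parts ≤ (G.maxDegree + 3) ^ 2 := by
  have hpart : ∀ P ∈ π.parts, ¬ Dominates G P ∧ ∃ Q ∈ π.parts, Dominates G (P ∪ Q) := by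
    intro P hP
    rcases hπ P hP with ⟨hcard, hdom⟩ | ⟨hnd, Q, hQ, -, -, hdom⟩
    · obtain ⟨v, rfl⟩ := card_eq_one.1 hcard
      exact absurd hdom (hG v)
    · exact ⟨hnd, Q, hQ, hdom⟩
  rcases isEmpty_or_nonempty V with hV | hV
  · simp [Finpartition.parts_eq_empty_iff.2 (univ_eq_empty (α := V))]
  set A := partsMeeting G π
  obtain ⟨⟨z, z'⟩, -, hmin⟩ :=
    exists_min_image univ (fun p : V × V => #(A p.1 ∩ A p.2)) univ_nonempty
  choose! w hw using fun T hT =>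
    not_forall.1 (mt dominates_iff_forall_not_disjoint_closedNbhd.2 (hpart T hT).1)
  simp only [not_not] at hw
  set m := #(A z ∩ A z')
  have hfresh :
      ∀ T ∈ A z ∩ A z', #(A (w T) \ (A z ∪ A z')) ≤ G.maxDegree + 1 - (m + 1) := by
    intro T hT
    obtain ⟨hTz, hTz'⟩ := mem_inter.1 hT
    have hTw : T ∉ A (w T) := fun h => (mem_filter.1 h).2 (hw T (mem_filter.1 hTz).1)
    have hlt : #(A (w T) \ (A z ∪ A z')) + m < #(A (w T)) :=
      card_sdiff_union_add_card_inter_lt (hmin (w T, z) (mem_univ _))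
        (hmin (w T, z') (mem_univ _)) hTz hTz' hTw
    have hwT : #(A (w T)) ≤ G.maxDegree + 1 := card_partsMeeting_le (w T)
    omega
  have hcover :
      π.parts ⊆ (A z ∪ A z') ∪ (A z ∩ A z').biUnion fun T => A (w T) \ (A z ∪ A z') :=
    parts_subset_partsMeeting_union (fun P hP => (hpart P hP).2) hw z z'
  have hcount := (card_le_card hcover).trans (card_union_le _ _)
  have hfresh_total : #((A z ∩ A z').biUnion fun T => A (w T) \ (A z ∪ A z')) ≤
      m * (G.maxDegree + 1 - (m + 1)) := card_biUnion_le_card_mul _ _ _ hfresh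
  have hunion : #(A z ∪ A z') + m = #(A z) + #(A z') := card_union_add_card_inter _ _
  have hz : #(A z) ≤ G.maxDegree + 1 := card_partsMeeting_le z
  have hz' : #(A z') ≤ G.maxDegree + 1 := card_partsMeeting_le z'
  refine Nat.four_mul_le_sq_of_add_le (m := m) ?_
  omega

end UpperBound

section LowerBound

variable {V : Type*} [Fintype V] [DecidableEq V] {G : SimpleGraph V} [DecidableRel G.Adj]

lemma not_dominates_compl_closedNbhd (v : V) : ¬ Dominates G (G.closedNbhd v)ᶜ :=
  fun h => dominates_iff_forall_not_disjoint_closedNbhd.1 h v disjoint_compl_left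

/-- For `y ∈ N(v) \ {u}` with no neighbour outside `N[v] \ {u}`, all `deg y ≥ deg v` neighbours
of `y` would lie in `N[v] \ {u, y}`, which has only `deg v - 1` elements. -/
lemma dominates_singleton_union_compl_closedNbhd {u v : V} (hv : ∀ y, G.degree v ≤ G.degree y)
    (hu : u ∈ G.closedNbhd v) : Dominates G ({u} ∪ (G.closedNbhd v)ᶜ) := by
  intro y hy
  simp only [mem_union, mem_singleton, mem_compl, not_or, not_not] at hy
  obtain ⟨hyu, hyv⟩ := hy
  rcases mem_closedNbhd.1 hu with rfl | hvu
  · obtain rfl | hvy := mem_closedNbhd.1 hyv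
    · exact absurd rfl hyu
    · exact ⟨u, mem_union_left _ (mem_singleton_self u), hvy⟩
  obtain rfl | hvy := mem_closedNbhd.1 hyv
  · exact ⟨u, mem_union_left _ (mem_singleton_self u), hvu.symm⟩
  by_contra! hno
  have hsub : G.neighborFinset y ⊆ ((G.closedNbhd v).erase u).erase y := by
    intro x hx
    have hyx := (mem_neighborFinset G y x).1 hx
    have hxu : x ≠ u := by
      rintro rfl
      exact hno x (mem_union_left _ (mem_singleton_self x)) hyx.symm
    have hxv : x ∈ G.closedNbhd v := by
      by_contra hxv
      exact hno x (mem_union_right _ (mem_compl.2 hxv)) hyx.symm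
    exact mem_erase.2 ⟨hyx.ne.symm, mem_erase.2 ⟨hxu, hxv⟩⟩
  have hcard := card_le_card hsub
  rw [card_neighborFinset_eq_degree, card_erase_of_mem (mem_erase.2 ⟨hyu, hyv⟩),
    card_erase_of_mem hu, card_closedNbhd] at hcard
  have := hv y
  have := G.degree_pos_iff_exists_adj v |>.2 ⟨u, hvu⟩
  omega

theorem exists_isCoalitionPartition_card_eq_degree_add_two {v : V}
    (hv : ∀ y, G.degree v ≤ G.degree y) (hG : ∀ y, ¬ Dominates G {y}) :
    ∃ π : Finpartition (univ : Finset V), IsCoalitionPartition G π ∧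
      #π.parts = G.degree v + 2 := by
  set R := (G.closedNbhd v)ᶜ
  have hR : R ≠ ⊥ := by
    obtain ⟨x, hx⟩ := not_forall.1 (mt dominates_iff_forall_not_disjoint_closedNbhd.2 (hG v))
    refine ne_empty_of_mem (a := x) (mem_compl.2 fun hxv => hx ?_)
    simpa using mem_closedNbhd_comm.1 hxv
  let π := (⊥ : Finpartition (G.closedNbhd v)).extend hR disjoint_compl_right
    (union_compl _)
  refine ⟨π, ?_, by rw [Finpartition.card_extend, Finpartition.card_bot, card_closedNbhd]⟩
  have hRπ : R ∈ π.parts := mem_insert_self _ _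
  have hsingleton : ∀ u ∈ G.closedNbhd v, {u} ∈ π.parts ∧ R ≠ {u} := fun u hu =>
    ⟨mem_insert_of_mem (Finpartition.mem_bot_iff.2 ⟨u, hu, rfl⟩),
      fun h => mem_compl.1 (h ▸ mem_singleton_self u : u ∈ R) hu⟩
  have hvv : v ∈ G.closedNbhd v := mem_closedNbhd.2 (.inl rfl)
  intro X hX
  right
  rcases mem_insert.1 hX with rfl | hX
  · refine ⟨not_dominates_compl_closedNbhd v, {v}, (hsingleton v hvv).1,
      (hsingleton v hvv).2.symm, hG v, ?_⟩
    rw [union_comm]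
    exact dominates_singleton_union_compl_closedNbhd hv hvv
  · obtain ⟨u, hu, rfl⟩ := Finpartition.mem_bot_iff.1 hX
    exact ⟨hG u, R, hRπ, (hsingleton u hu).2, not_dominates_compl_closedNbhd v,
      dominates_singleton_union_compl_closedNbhd hv hu⟩

end LowerBound

theorem stmt13_general {V : Type*} [Fintype V] [DecidableEq V] (G : SimpleGraph V)
    [DecidableRel G.Adj] (hreg : G.IsRegularOfDegree 3) (h6 : 6 ≤ Fintype.card V) :
    5 ≤ coalitionNumber V G ∧ coalitionNumber V G ≤ 9 := by
  have hV : Nonempty V := Fintype.card_pos_iff.1 (by omega)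
  have hG : ∀ v, ¬ Dominates G {v} := fun v h => by
    have := h.card_le_degree_add_one
    rw [hreg.degree_eq] at this
    omega
  have hupper : ∀ π, IsCoalitionPartition G π → #π.parts ≤ 9 := fun π hπ => by
    have := hπ.four_mul_card_parts_le_s13 hG
    rw [hreg.maxDegree_eq] at this
    omega
  obtain ⟨π₀, hπ₀, hcard₀⟩ := exists_isCoalitionPartition_card_eq_degree_add_two
    (v := Classical.arbitrary V) (fun y => by rw [hreg.degree_eq, hreg.degree_eq]) hG
  rw [hreg.degree_eq] at hcard₀
  exact ⟨le_csSup ⟨9, by rintro _ ⟨π, hπ, rfl⟩; exact hupper π hπ⟩ ⟨π₀, hπ₀, hcard₀⟩,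
    csSup_le ⟨5, π₀, hπ₀, hcard₀⟩ fun _ ⟨π, hπ, hk⟩ => hk ▸ hupper π hπ⟩

theorem stmt13 {V : Type*} [Fintype V] [DecidableEq V] (G : SimpleGraph V) [DecidableRel G.Adj]
    [DecidableRel G.Adj] (hreg : G.IsRegularOfDegree 3) (h6 : 6 ≤ Fintype.card V) :
    5 ≤ coalitionNumber V G ∧ coalitionNumber V G ≤ 9 :=
  stmt13_general G hreg h6
end

section
/- In any graph G with domination number γ(G) ≥ 3, no two singleton classes of a coalition partition form a coalition; consequently, in a coalition partition of such a G consisting of s singleton classes and t non-singleton classes, every singleton class must form a coalition with some non-singleton class, and hence s ≤ t·(Δ(G)+1). -/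
open Finset

/-! Two classes of size one have a union of size at most two, which cannot dominate when
`γ(G) ≥ 3`; so a singleton class has no dominating partner of size one, and being itself
non-dominating it must form a coalition with a larger class. For the count, fix a
non-dominating class `Y` and a vertex `v` that `Y` does not dominate: a singleton `{x}` can
complete `Y` to a dominating set only if `x` dominates `v`, i.e. `x` lies in the closed
neighbourhood of `v`, which has at most `Δ(G) + 1` vertices. -/

section

variable {V : Type*} [DecidableEq V] {G : SimpleGraph V}

theorem not_dominates_union_of_card_add_lt {k : ℕ}
    (hγ : ∀ S : Finset V, Dominates G S → k ≤ S.card) {X Y : Finset V}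
    (hXY : X.card + Y.card < k) : ¬ Dominates G (X ∪ Y) := fun hdom =>
  absurd ((hγ _ hdom).trans (card_union_le X Y)) (by omega)

theorem exists_forall_dominates_singleton_union_mem_closedNeighborhood
    [Fintype V] [DecidableRel G.Adj] {Y : Finset V} (hY : ¬ Dominates G Y) :
    ∃ v, ∀ x, Dominates G ({x} ∪ Y) → x ∈ insert v (G.neighborFinset v) := by
  simp only [Dominates, not_forall, not_exists, not_and] at hY
  obtain ⟨v, hvY, hv⟩ := hY
  refine ⟨v, fun x hdom => ?_⟩
  by_cases hvx : v = x
  · exact hvx ▸ mem_insert_self v _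
  obtain ⟨u, hu, hadj⟩ := hdom v (by simp [hvx, hvY])
  rcases mem_union.mp hu with hux | huY
  · rw [mem_singleton.mp hux] at hadj
    exact mem_insert_of_mem ((G.mem_neighborFinset v x).mpr hadj.symm)
  · exact absurd hadj (hv u huY)

theorem card_le_of_forall_card_eq_one_dominates_union [Fintype V] [DecidableRel G.Adj]
    {Y : Finset V} (hY : ¬ Dominates G Y) (𝒮 : Finset (Finset V))
    (h𝒮 : ∀ X ∈ 𝒮, X.card = 1 ∧ Dominates G (X ∪ Y)) :
    𝒮.card ≤ G.maxDegree + 1 := by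
  obtain ⟨v, hv⟩ := exists_forall_dominates_singleton_union_mem_closedNeighborhood hY
  have hsub : 𝒮 ⊆ (insert v (G.neighborFinset v)).image singleton := by
    intro X hX
    obtain ⟨hX1, hdom⟩ := h𝒮 X hX
    obtain ⟨x, rfl⟩ := card_eq_one.mp hX1
    exact mem_image_of_mem _ (hv x hdom)
  calc _ ≤ _ := card_le_card hsub
    _ ≤ (insert v (G.neighborFinset v)).card := card_image_le
    _ ≤ (G.neighborFinset v).card + 1 := card_insert_le _ _
    _ ≤ G.maxDegree + 1 := by
      rw [G.card_neighborFinset_eq_degree]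
      exact Nat.succ_le_succ (G.degree_le_maxDegree v)

section CoalitionPartition

variable [Fintype V] {π : Finpartition (univ : Finset V)}

theorem not_dominates_of_mem_parts_of_card_ne_one (hπ : IsCoalitionPartition G π)
    {Y : Finset V} (hY : Y ∈ π.parts) (hY1 : Y.card ≠ 1) : ¬ Dominates G Y := by
  rcases hπ Y hY with ⟨hcard, _⟩ | ⟨hnY, _⟩
  · exact absurd hcard hY1
  · exact hnY

theorem exists_coalition_partner_of_card_eq_one
    (hγ : ∀ S : Finset V, Dominates G S → 3 ≤ S.card) (hπ : IsCoalitionPartition G π)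
    {X : Finset V} (hX : X ∈ π.parts) (hX1 : X.card = 1) :
    ∃ Y ∈ π.parts, Y ≠ X ∧ Y.card ≠ 1 ∧ FormsCoalition G X Y := by
  rcases hπ X hX with ⟨_, hdom⟩ | ⟨hnX, Y, hY, hYX, hnY, hdXY⟩
  · exact absurd (hγ X hdom) (by omega)
  · refine ⟨Y, hY, hYX, fun hY1 => ?_, hnX, hnY, hdXY⟩
    exact not_dominates_union_of_card_add_lt hγ (by omega) hdXY

theorem card_singleton_parts_le [DecidableRel G.Adj]
    (hγ : ∀ S : Finset V, Dominates G S → 3 ≤ S.card) (hπ : IsCoalitionPartition G π) :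
    (π.parts.filter (fun X => X.card = 1)).card ≤
      (π.parts.filter (fun X => X.card ≠ 1)).card * (G.maxDegree + 1) := by
  classical
  set singletons := π.parts.filter (fun X => X.card = 1)
  set others := π.parts.filter (fun X => X.card ≠ 1)
  have hcover : singletons ⊆
      others.biUnion fun Y => singletons.filter fun X => Dominates G (X ∪ Y) := by
    intro X hX
    obtain ⟨hXπ, hX1⟩ := mem_filter.mp hX
    obtain ⟨Y, hY, -, hY1, hco⟩ := exists_coalition_partner_of_card_eq_one hγ hπ hXπ hX1
    exact mem_biUnion.mpr ⟨Y, mem_filter.mpr ⟨hY, hY1⟩, mem_filter.mpr ⟨hX, hco.2.2⟩⟩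
  refine (card_le_card hcover).trans (card_biUnion_le_card_mul _ _ _ fun Y hY => ?_)
  obtain ⟨hYπ, hY1⟩ := mem_filter.mp hY
  refine card_le_of_forall_card_eq_one_dominates_union
    (not_dominates_of_mem_parts_of_card_ne_one hπ hYπ hY1) _ fun X hX => ?_
  obtain ⟨hXs, hdom⟩ := mem_filter.mp hX
  exact ⟨(mem_filter.mp hXs).2, hdom⟩

end CoalitionPartition

end

theorem stmt16 {V : Type*} [Fintype V] [DecidableEq V] (G : SimpleGraph V) [DecidableRel G.Adj]
    (hγ : ∀ S : Finset V, Dominates G S → 3 ≤ S.card)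
    (π : Finpartition (univ : Finset V)) (hπ : IsCoalitionPartition G π) :
    (∀ X ∈ π.parts, ∀ Y ∈ π.parts, X.card = 1 → Y.card = 1 → X ≠ Y → ¬ FormsCoalition G X Y) ∧
    (∀ X ∈ π.parts, X.card = 1 → ∃ Y ∈ π.parts, Y ≠ X ∧ Y.card ≠ 1 ∧ FormsCoalition G X Y) ∧
    (π.parts.filter (fun X => X.card = 1)).card ≤
      (π.parts.filter (fun X => X.card ≠ 1)).card * (G.maxDegree + 1) :=
  ⟨fun _ _ _ _ hX1 hY1 _ hco => not_dominates_union_of_card_add_lt hγ (by omega) hco.2.2,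
    fun _ hX hX1 => exists_coalition_partner_of_card_eq_one hγ hπ hX hX1,
    card_singleton_parts_le hγ hπ⟩
end
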